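/- For every nonnegative integer n and every complex number z, ∑_{k=0}^{n} (4^{2k+1}/(2(n-k)+1)) · C(2n+1,2k+1) · B_{2k+1}(z) = ∑_{k=0}^{n} 2^{2k+1} · C(2n+1,2k+1) · E_{2k+1}(2z) − ∑_{k=0}^{n} 2^{2k} · C(2n+1,2k) · E_{2k}(2z), where C(n,k) denotes the binomial coefficient. -/

import Mathlib

/-!
With `N = 2n + 2`, the left side is the odd part of the binomial transform
`∑ C(N,j) 4^j B_j(z) = 4^N B_N(z + 1/4)` given by the addition theorem for Bernoulli polynomials,
so it equals `4^N/(2N) · (B_N(z + 1/4) - B_N(z - 1/4))`; likewise the addition theorem for Euler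
polynomials collapses the right side to `2^(N-1) E_(N-1)(2z - 1/2)`. The identity is then the
classical relation `N E_(N-1)(x) = 2^N (B_N((x+1)/2) - B_N(x/2))`: both sides `f` satisfy
`f(x) + f(x+1) = 2N x^(N-1)`, and a polynomial `g` with `g(x+1) = -g(x)` vanishes, because
`Δ g = -2g` while a power of the forward difference `Δ` kills `g`.
-/

open Finset

/-- The Bernoulli polynomial `B_n` evaluated at a complex number `z`,
with generating function `t·e^{zt}/(e^t−1) = ∑_{n≥0} B_n(z)·t^n/n!`. -/
noncomputable def bernoulliPoly (n : ℕ) (z : ℂ) : ℂ :=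
  Polynomial.aeval z (Polynomial.bernoulli n)

/-- The Euler polynomial `E_n` evaluated at a complex number `z`,
with generating function `2·e^{zt}/(e^t+1) = ∑_{n≥0} E_n(z)·t^n/n!`,
given by the explicit formula `E_n(z) = ∑_{k=0}^n 2^{-k} ∑_{j=0}^k (-1)^j C(k,j)(z+j)^n`. -/
noncomputable def eulerPoly (n : ℕ) (z : ℂ) : ℂ :=
  ∑ k ∈ range (n + 1), (1 / 2 ^ k : ℂ) *
    ∑ j ∈ range (k + 1), (-1) ^ j * (k.choose j : ℂ) * (z + j) ^ n

open Function Polynomial fwdDiff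

theorem Finset.sum_range_two_mul {M : Type*} [AddCommMonoid M] (f : ℕ → M) (m : ℕ) :
    ∑ j ∈ range (2 * m), f j = ∑ k ∈ range m, (f (2 * k) + f (2 * k + 1)) := by
  induction m with
  | zero => simp
  | succ m ih => rw [mul_add_one, sum_range_succ, sum_range_succ, sum_range_succ, ih, add_assoc]

theorem sum_choose_mul_pow_mul_eq_of_add {K : Type*} [Field K] (P : ℕ → K → K) (N : ℕ)
    (hP : ∀ x y, P N (x + y) = ∑ j ∈ range (N + 1), N.choose j * P j x * y ^ (N - j))
    {a : K} (ha : a ≠ 0) (x : K) :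
    ∑ j ∈ range (N + 1), N.choose j * a ^ j * P j x = a ^ N * P N (x + a⁻¹) := by
  rw [hP, mul_sum]
  refine sum_congr rfl fun j hj => ?_
  rw [← pow_mul_pow_sub a (mem_range_succ_iff.mp hj), inv_pow]
  field_simp

theorem neg_one_pow_mul_neg_one_pow_sub {R : Type*} [Monoid R] [HasDistribNeg R] {j k : ℕ}
    (hjk : j ≤ k) : (-1 : R) ^ k * (-1) ^ (k - j) = (-1) ^ j := by
  obtain ⟨i, rfl⟩ := Nat.exists_eq_add_of_le hjk
  rw [Nat.add_sub_cancel_left, pow_add, mul_assoc, ← pow_add, ← two_mul, pow_mul, neg_one_sq,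
    one_pow, mul_one]

theorem Function.Antiperiodic.eq_zero_of_fwdDiff_iter_eq_zero {M G : Type*} [AddCommMonoid M]
    [AddCommGroup G] [IsAddTorsionFree G] {f : M → G} {h : M} {d : ℕ} (hf : Antiperiodic f h)
    (hd : (Δ_[h])^[d] f = 0) : f = 0 := by
  have hΔ : Δ_[h] f = (-2 : ℤ) • f := funext fun x => by
    simp only [fwdDiff, hf x, Pi.smul_apply]
    rw [neg_smul, two_zsmul]; abel
  have hiter : ∀ n : ℕ, (Δ_[h])^[n] f = (-2 : ℤ) ^ n • f := by
    intro n
    induction n with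
    | zero => simp
    | succ n ih => rw [iterate_succ_apply, hΔ, fwdDiff_iter_const_smul, ih, smul_smul, pow_succ']
  rw [hiter] at hd
  exact funext fun x =>
    (IsAddTorsionFree.zsmul_eq_zero_iff_right (by positivity)).mp (congrFun hd x)

theorem sum_neg_half_pow_mul_fwdDiff_iter_add_shift {M K : Type*} [AddCommMonoid M] [Field K]
    [NeZero (2 : K)] (f : M → K) (h : M) (m : ℕ) (hf : (Δ_[h])^[m + 1] f = 0) (x : M) :
    ∑ k ∈ range (m + 1), (-1 / 2 : K) ^ k * (Δ_[h])^[k] f x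
      + ∑ k ∈ range (m + 1), (-1 / 2 : K) ^ k * (Δ_[h])^[k] f (x + h) = 2 * f x := by
  set g : ℕ → K := fun k => 2 * ((-1 / 2 : K) ^ k * (Δ_[h])^[k] f x)
  have hstep : ∀ k, (-1 / 2 : K) ^ k * (Δ_[h])^[k] f x
      + (-1 / 2 : K) ^ k * (Δ_[h])^[k] f (x + h) = g k - g (k + 1) := fun k => by
    have hshift : (Δ_[h])^[k] f (x + h) = (Δ_[h])^[k] f x + (Δ_[h])^[k + 1] f x := by
      rw [iterate_succ_apply', fwdDiff]; ring
    have htwo : (2 : K) * (-1 / 2) = -1 := by rw [mul_div_cancel₀ _ two_ne_zero]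
    simp only [g, hshift, pow_succ]
    linear_combination ((-1 / 2 : K) ^ k * (Δ_[h])^[k + 1] f x) * htwo
  rw [← sum_add_distrib, sum_congr rfl fun k _ => hstep k, sum_range_sub']
  simp [g, hf]

theorem Polynomial.hasseDeriv_map {R S : Type*} [Semiring R] [Semiring S] (f : R →+* S) (k : ℕ)
    (p : R[X]) : (hasseDeriv k p).map f = hasseDeriv k (p.map f) := by
  ext n
  simp [hasseDeriv_coeff]

theorem Polynomial.iterate_derivative_bernoulli (k n : ℕ) :
    derivative^[k] (bernoulli n) = n.descFactorial k • bernoulli (n - k) := by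
  induction k with
  | zero => simp
  | succ k ih =>
    rw [iterate_succ_apply', ih, derivative_smul, derivative_bernoulli, ← nsmul_eq_mul, smul_smul,
      Nat.descFactorial_succ, mul_comm, Nat.sub_sub]

theorem Polynomial.hasseDeriv_bernoulli (k n : ℕ) :
    hasseDeriv k (bernoulli n) = n.choose k • bernoulli (n - k) := by
  refine nsmul_right_injective (Nat.factorial_ne_zero k) ?_
  dsimp only
  rw [← LinearMap.smul_apply, factorial_smul_hasseDeriv, iterate_derivative_bernoulli, smul_smul,
    Nat.descFactorial_eq_factorial_mul_choose]

theorem Polynomial.natDegree_bernoulli_le (n : ℕ) : (bernoulli n).natDegree ≤ n :=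
  natDegree_le_iff_coeff_eq_zero.mpr fun i hi => by simp [coeff_bernoulli, hi.not_ge]

theorem Polynomial.bernoulli_aeval_add {A : Type*} [CommRing A] [Algebra ℚ A] (n : ℕ) (x y : A) :
    aeval (x + y) (bernoulli n)
      = ∑ j ∈ range (n + 1), n.choose j * aeval x (bernoulli j) * y ^ (n - j) := by
  set p := (bernoulli n).map (algebraMap ℚ A)
  have hcoeff : ∀ i, (taylor x p).coeff i = n.choose i * aeval x (bernoulli (n - i)) := by
    intro i
    rw [taylor_coeff, ← hasseDeriv_map, hasseDeriv_bernoulli, nsmul_eq_mul, Polynomial.map_mul,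
      Polynomial.map_natCast, eval_mul, eval_natCast, eval_map_algebraMap]
  have hdeg : (taylor x p).natDegree < n + 1 := by
    rw [natDegree_taylor]
    exact Nat.lt_succ_of_le (natDegree_map_le.trans (natDegree_bernoulli_le n))
  rw [← eval_map_algebraMap, add_comm, ← taylor_eval, eval_eq_sum_range' hdeg]
  simp_rw [hcoeff]
  rw [← sum_range_reflect]
  refine sum_congr rfl fun j hj => ?_
  have hjn : j ≤ n := mem_range_succ_iff.mp hj
  rw [Nat.add_sub_cancel, Nat.choose_symm hjn, Nat.sub_sub_self hjn]

theorem bernoulliPoly_add_one (m : ℕ) (x : ℂ) :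
    bernoulliPoly m (x + 1) = bernoulliPoly m x + m * x ^ (m - 1) := by
  simpa [bernoulliPoly, aeval_comp, add_comm] using congr(aeval x $(bernoulli_comp_one_add_X m))

theorem fwdDiff_iter_bernoulliPoly_comp {m d : ℕ} (hd : m < d) (a b : ℂ) :
    (Δ_[1])^[d] (fun x => bernoulliPoly m (a * x + b)) = 0 := by
  have hpoly : (fun x => bernoulliPoly m (a * x + b))
      = (((Polynomial.bernoulli m).map (algebraMap ℚ ℂ)).comp (C a * X + C b)).eval := by
    ext x
    simp [bernoulliPoly]
  rw [hpoly]
  refine fwdDiff_iter_eq_zero_of_degree_lt (natDegree_comp_le.trans_lt ?_)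
  calc _ ≤ m * 1 := Nat.mul_le_mul (natDegree_map_le.trans (natDegree_bernoulli_le m))
        natDegree_linear_le
    _ < d := by omega

theorem eulerPoly_eq_sum_fwdDiff_iter (m K : ℕ) (hK : m ≤ K) (z : ℂ) :
    eulerPoly m z
      = ∑ k ∈ range (K + 1), (-1 / 2 : ℂ) ^ k * (Δ_[1])^[k] (fun r : ℂ => r ^ m) z := by
  have hzero : ∀ k ∈ range (K + 1), k ∉ range (m + 1) →
      (-1 / 2 : ℂ) ^ k * (Δ_[1])^[k] (fun r : ℂ => r ^ m) z = 0 := fun k _ hk => by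
    rw [fwdDiff_iter_pow_eq_zero_of_lt (by simpa using hk), Pi.zero_apply, mul_zero]
  rw [← sum_subset (range_subset_range.mpr (by omega)) hzero, eulerPoly]
  refine sum_congr rfl fun k _ => ?_
  rw [fwdDiff_iter_eq_sum_shift, div_pow, mul_sum, mul_sum]
  refine sum_congr rfl fun j hj => ?_
  rw [zsmul_eq_mul, nsmul_one, ← neg_one_pow_mul_neg_one_pow_sub (mem_range_succ_iff.mp hj)]
  push_cast
  ring

theorem eulerPoly_add_eulerPoly_add_one (m : ℕ) (z : ℂ) :
    eulerPoly m z + eulerPoly m (z + 1) = 2 * z ^ m := by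
  rw [eulerPoly_eq_sum_fwdDiff_iter m m le_rfl, eulerPoly_eq_sum_fwdDiff_iter m m le_rfl]
  exact sum_neg_half_pow_mul_fwdDiff_iter_add_shift _ 1 m
    (fwdDiff_iter_pow_eq_zero_of_lt m.lt_succ_self) z

theorem fwdDiff_iter_eulerPoly {m d : ℕ} (hd : m < d) : (Δ_[1])^[d] (eulerPoly m) = 0 := by
  have hsum : eulerPoly m
      = ∑ k ∈ range (m + 1), (-1 / 2 : ℂ) ^ k • (Δ_[1])^[k] (fun r : ℂ => r ^ m) := by
    ext z
    simp [eulerPoly_eq_sum_fwdDiff_iter m m le_rfl]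
  rw [hsum, fwdDiff_iter_finsetSum]
  refine sum_eq_zero fun k _ => ?_
  rw [fwdDiff_iter_const_smul, ← iterate_add_apply, fwdDiff_iter_pow_eq_zero_of_lt (by omega),
    smul_zero]

theorem eulerPoly_add (M : ℕ) (x y : ℂ) :
    eulerPoly M (x + y) = ∑ j ∈ range (M + 1), M.choose j * eulerPoly j x * y ^ (M - j) := by
  have hbinom : (fun r : ℂ => (r + y) ^ M)
      = ∑ j ∈ range (M + 1), ((M.choose j : ℂ) * y ^ (M - j)) • fun r : ℂ => r ^ j := by
    ext r
    simp only [add_pow, Finset.sum_apply, Pi.smul_apply, smul_eq_mul]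
    exact sum_congr rfl fun j _ => by ring
  have hshift : ∀ k, (Δ_[1])^[k] (fun r : ℂ => r ^ M) (x + y)
      = ∑ j ∈ range (M + 1),
          M.choose j * y ^ (M - j) * (Δ_[1])^[k] (fun r : ℂ => r ^ j) x := by
    intro k
    rw [← fwdDiff_iter_comp_add, hbinom, fwdDiff_iter_finsetSum]
    simp
  simp_rw [eulerPoly_eq_sum_fwdDiff_iter M M le_rfl, hshift, mul_sum]
  rw [sum_comm]
  refine sum_congr rfl fun j hj => ?_
  rw [eulerPoly_eq_sum_fwdDiff_iter j M (mem_range_succ_iff.mp hj), mul_sum, sum_mul]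
  exact sum_congr rfl fun k _ => by ring

theorem add_one_mul_eulerPoly (m : ℕ) (x : ℂ) :
    (m + 1) * eulerPoly m x
      = 2 ^ (m + 1) * (bernoulliPoly (m + 1) ((x + 1) / 2) - bernoulliPoly (m + 1) (x / 2)) := by
  set D : ℂ → ℂ := fun x => (m + 1) * eulerPoly m x
    - 2 ^ (m + 1) * (bernoulliPoly (m + 1) ((x + 1) / 2) - bernoulliPoly (m + 1) (x / 2))
  have hanti : Antiperiodic D 1 := fun x => by
    have hE := eulerPoly_add_eulerPoly_add_one m x
    have hB := bernoulliPoly_add_one (m + 1) (x / 2)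
    have hpow : (2 : ℂ) ^ (m + 1) * (x / 2) ^ m = 2 * x ^ m := by
      rw [div_pow, pow_succ]; field_simp
    simp only [D]
    rw [show (x + 1 + 1) / 2 = x / 2 + 1 by ring, hB, Nat.add_sub_cancel]
    push_cast
    linear_combination (m + 1 : ℂ) * hE - (m + 1 : ℂ) * hpow
  have hΔ : (Δ_[1])^[m + 2] D = 0 := by
    have hsplit : D = (m + 1 : ℂ) • eulerPoly m
        + (-2 ^ (m + 1) : ℂ) • (fun x => bernoulliPoly (m + 1) (2⁻¹ * x + 2⁻¹))
        + (2 ^ (m + 1) : ℂ) • (fun x => bernoulliPoly (m + 1) (2⁻¹ * x + 0)) := by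
      ext x
      simp only [D, Pi.add_apply, Pi.smul_apply, smul_eq_mul]
      ring_nf
    rw [hsplit, fwdDiff_iter_add, fwdDiff_iter_add, fwdDiff_iter_const_smul,
      fwdDiff_iter_const_smul, fwdDiff_iter_const_smul, fwdDiff_iter_eulerPoly (by omega),
      fwdDiff_iter_bernoulliPoly_comp (by omega), fwdDiff_iter_bernoulliPoly_comp (by omega)]
    simp
  have hDx : D x = 0 := congrFun (hanti.eq_zero_of_fwdDiff_iter_eq_zero hΔ) x
  linear_combination hDx

theorem sum_odd_bernoulliPoly (n : ℕ) (z : ℂ) :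
    4 * (n + 1) * ∑ k ∈ range (n + 1), (4 : ℂ) ^ (2 * k + 1) / (2 * (n - k : ℕ) + 1)
        * ((2 * n + 1).choose (2 * k + 1) : ℂ) * bernoulliPoly (2 * k + 1) z
      = 4 ^ (2 * n + 2) * (bernoulliPoly (2 * n + 2) (z + 1 / 4)
        - bernoulliPoly (2 * n + 2) (z - 1 / 4)) := by
  have htr : ∀ a : ℂ, a ≠ 0 → ∑ j ∈ range (2 * n + 2 + 1), (2 * n + 2).choose j * a ^ j
      * bernoulliPoly j z = a ^ (2 * n + 2) * bernoulliPoly (2 * n + 2) (z + a⁻¹) :=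
    fun a ha => sum_choose_mul_pow_mul_eq_of_add bernoulliPoly (2 * n + 2)
      (Polynomial.bernoulli_aeval_add _) ha z
  have hN : Even (2 * n + 2) := ⟨n + 1, by ring⟩
  -- subtracting the transforms at `a = 4` and `a = -4` leaves twice the odd-index terms
  rw [show z + 1 / 4 = z + 4⁻¹ by ring, show z - 1 / 4 = z + (-4)⁻¹ by ring, mul_sub,
    ← htr 4 (by norm_num), ← hN.neg_pow, ← htr (-4) (by norm_num), ← sum_sub_distrib,
    sum_range_succ _ (2 * n + 2), hN.neg_pow, sub_self, add_zero,
    show 2 * n + 2 = 2 * (n + 1) by ring, sum_range_two_mul, mul_sum]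
  refine sum_congr rfl fun k hk => ?_
  have hkn : k ≤ n := mem_range_succ_iff.mp hk
  have hchoose : ((2 * (n - k) + 1 : ℕ) : ℂ) * (2 * (n + 1)).choose (2 * k + 1)
      = (2 * (n + 1)) * (2 * n + 1).choose (2 * k + 1) := by
    have h := Nat.choose_mul_succ_eq (2 * n + 1) (2 * k + 1)
    rw [show 2 * n + 1 + 1 - (2 * k + 1) = 2 * (n - k) + 1 by omega,
      show 2 * n + 1 + 1 = 2 * (n + 1) by ring] at h
    exact_mod_cast (by linarith : (2 * (n - k) + 1) * (2 * (n + 1)).choose (2 * k + 1)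
      = 2 * (n + 1) * (2 * n + 1).choose (2 * k + 1))
  have hpos : ((2 * (n - k) + 1 : ℕ) : ℂ) ≠ 0 := Nat.cast_ne_zero.mpr (by omega)
  push_cast at hchoose hpos
  rw [Even.neg_pow ⟨k, two_mul k⟩, Odd.neg_pow ⟨k, rfl⟩]
  field_simp
  linear_combination (-2 * 4 ^ (2 * k + 1) * bernoulliPoly (2 * k + 1) z) * hchoose

theorem sum_odd_sub_sum_even_eulerPoly (n : ℕ) (z : ℂ) :
    ∑ k ∈ range (n + 1), (2 : ℂ) ^ (2 * k + 1) * ((2 * n + 1).choose (2 * k + 1) : ℂ)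
        * eulerPoly (2 * k + 1) (2 * z)
      - ∑ k ∈ range (n + 1), (2 : ℂ) ^ (2 * k) * ((2 * n + 1).choose (2 * k) : ℂ)
        * eulerPoly (2 * k) (2 * z)
      = 2 ^ (2 * n + 1) * eulerPoly (2 * n + 1) (2 * z - 1 / 2) := by
  have htr := sum_choose_mul_pow_mul_eq_of_add eulerPoly (2 * n + 1) (eulerPoly_add _)
    (a := -2) (by norm_num) (2 * z)
  rw [show 2 * n + 1 + 1 = 2 * (n + 1) by ring, sum_range_two_mul,
    Odd.neg_pow ⟨n, rfl⟩, show 2 * z + (-2)⁻¹ = 2 * z - 1 / 2 by ring] at htr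
  rw [← sum_sub_distrib, ← neg_neg (2 ^ (2 * n + 1) * _), ← neg_mul, ← htr, ← sum_neg_distrib]
  refine sum_congr rfl fun k _ => ?_
  rw [Even.neg_pow ⟨k, two_mul k⟩, Odd.neg_pow ⟨k, rfl⟩]
  ring

theorem stmt9 (n : ℕ) (z : ℂ) :
    ∑ k ∈ range (n + 1), (4 : ℂ) ^ (2 * k + 1) / (2 * (n - k : ℕ) + 1) *
        ((2 * n + 1).choose (2 * k + 1) : ℂ) * bernoulliPoly (2 * k + 1) z
      = ∑ k ∈ range (n + 1), (2 : ℂ) ^ (2 * k + 1) *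
          ((2 * n + 1).choose (2 * k + 1) : ℂ) * eulerPoly (2 * k + 1) (2 * z)
        - ∑ k ∈ range (n + 1), (2 : ℂ) ^ (2 * k) *
          ((2 * n + 1).choose (2 * k) : ℂ) * eulerPoly (2 * k) (2 * z) := by
  have hL := sum_odd_bernoulliPoly n z
  have hrel := add_one_mul_eulerPoly (2 * n + 1) (2 * z - 1 / 2)
  rw [show (2 * z - 1 / 2 + 1) / 2 = z + 1 / 4 by ring,
    show (2 * z - 1 / 2) / 2 = z - 1 / 4 by ring, show 2 * n + 1 + 1 = 2 * n + 2 by ring] at hrel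
  push_cast at hrel
  have hfour : (4 : ℂ) ^ (2 * n + 2) = 2 ^ (2 * n + 2) * 2 ^ (2 * n + 2) := by
    rw [← mul_pow]; norm_num
  rw [sum_odd_sub_sum_even_eulerPoly]
  refine mul_left_cancel₀ (by norm_cast : (4 * (n + 1) : ℂ) ≠ 0) ?_
  linear_combination hL - 2 ^ (2 * n + 2) * hrel
    + (bernoulliPoly (2 * n + 2) (z + 1 / 4) - bernoulliPoly (2 * n + 2) (z - 1 / 4)) * hfour
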